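/- Let a > 0, ε > 0, λ > 0 and d ≥ 1 an integer. Then the series −∑_{k=1}^∞ (−1)^k λ^k (a k (2ε)^{k−1})^d / k! converges absolutely and equals (a/(2ε))^d e^{−λ(2ε)^d} (−B_d(−λ(2ε)^d)), where B_d is the d-th Bell polynomial. (This is the closed form for the mean Euler characteristic E[χ] = −∑_{k≥1} (−1)^k E[N_k] of the random Čech complex on the torus T_a^d, since E[N_k] = λ^k (a k (2ε)^{k−1})^d / k!.) -/

import Mathlib

/-- Stirling numbers of the second kind, via the standard recurrence
`S(n+1, k+1) = (k+1) S(n, k+1) + S(n, k)`. -/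
def stirlingSecond : ℕ → ℕ → ℕ
  | 0, 0 => 1
  | 0, _ + 1 => 0
  | _ + 1, 0 => 0
  | n + 1, k + 1 => (k + 1) * stirlingSecond n (k + 1) + stirlingSecond n k

/-- The `d`-th Bell polynomial `B_d(x) = ∑_{k=0}^d S(d,k) x^k`. -/
noncomputable def bellPoly (d : ℕ) (x : ℝ) : ℝ :=
  ∑ k ∈ Finset.range (d + 1), (stirlingSecond d k : ℝ) * x ^ k

/-! Put `x = -(λ (2ε)^d)`. The `k`-th term of the series is `(a/(2ε))^d · k^d x^k / k!`, so the
series is `(a/(2ε))^d` times Touchard's series `∑ n^d x^n / n! = eˣ B_d(x)`, whose `n = 0` term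
vanishes because `d ≥ 1`. Touchard's formula comes from expanding `n^d = ∑ₖ S(d,k) n(n-1)⋯(n-k+1)`
in falling factorials and summing termwise with `∑ₙ n(n-1)⋯(n-k+1) xⁿ / n! = xᵏ eˣ`. -/

open Finset
open scoped Nat

theorem stirlingSecond_eq_nat_stirlingSecond :
    ∀ n k : ℕ, stirlingSecond n k = Nat.stirlingSecond n k
  | 0, 0 | 0, _ + 1 | _ + 1, 0 => rfl
  | n + 1, k + 1 => by
    rw [stirlingSecond, Nat.stirlingSecond_succ_succ, stirlingSecond_eq_nat_stirlingSecond n,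
      stirlingSecond_eq_nat_stirlingSecond n]

theorem Nat.mul_descFactorial_eq_descFactorial_succ_add (n k : ℕ) :
    n * n.descFactorial k = n.descFactorial (k + 1) + k * n.descFactorial k := by
  rw [Nat.descFactorial_succ, ← Nat.add_mul]
  rcases le_or_gt k n with h | h
  · rw [Nat.sub_add_cancel h]
  · rw [Nat.descFactorial_of_lt h, Nat.mul_zero, Nat.mul_zero]

theorem Nat.pow_eq_sum_stirlingSecond_mul_descFactorial (n d : ℕ) :
    n ^ d = ∑ k ∈ range (d + 1), Nat.stirlingSecond d k * n.descFactorial k := by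
  induction d with
  | zero => simp
  | succ d ih =>
    calc n ^ (d + 1)
        = ∑ k ∈ range (d + 1), Nat.stirlingSecond d k * (n * n.descFactorial k) := by
          rw [pow_succ, ih, sum_mul]
          exact sum_congr rfl fun k _ => by ring
      _ = ∑ k ∈ range (d + 1), Nat.stirlingSecond d k * n.descFactorial (k + 1)
          + ∑ k ∈ range (d + 1), k * Nat.stirlingSecond d k * n.descFactorial k := by
          rw [← sum_add_distrib]
          exact sum_congr rfl fun k _ => by
            rw [Nat.mul_descFactorial_eq_descFactorial_succ_add]; ring
      _ = ∑ k ∈ range (d + 1), Nat.stirlingSecond d k * n.descFactorial (k + 1)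
          + ∑ k ∈ range (d + 1),
              (k + 1) * Nat.stirlingSecond d (k + 1) * n.descFactorial (k + 1) := by
          rw [sum_range_succ (fun k => (k + 1) * _ * _),
            sum_range_succ' (fun k => k * Nat.stirlingSecond d k * n.descFactorial k),
            Nat.stirlingSecond_eq_zero_of_lt (Nat.lt_succ_self d)]
          simp only [zero_mul, mul_zero, add_zero]
      _ = ∑ k ∈ range (d + 2), Nat.stirlingSecond (d + 1) k * n.descFactorial k := by
          rw [← sum_add_distrib, sum_range_succ' _ (d + 1), Nat.stirlingSecond_succ_zero,
            zero_mul, add_zero]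
          exact sum_congr rfl fun k _ => by rw [Nat.stirlingSecond_succ_succ]; ring

theorem Real.hasSum_descFactorial_mul_pow_div_factorial (k : ℕ) (x : ℝ) :
    HasSum (fun n : ℕ => (n.descFactorial k : ℝ) * x ^ n / n !) (x ^ k * exp x) := by
  rw [← hasSum_nat_add_iff' k, sum_eq_zero fun i hi => by
    rw [Nat.descFactorial_of_lt (mem_range.mp hi), Nat.cast_zero, zero_mul, zero_div], sub_zero]
  have hterm (n : ℕ) : ((n + k).descFactorial k : ℝ) * x ^ (n + k) / (n + k)! =
      x ^ k * (x ^ n / n !) := by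
    rw [← Nat.factorial_mul_descFactorial (Nat.le_add_left k n), Nat.add_sub_cancel, pow_add]
    push_cast
    field_simp
  simpa only [hterm] using
    (Real.exp_eq_exp_ℝ ▸ NormedSpace.expSeries_div_hasSum_exp x).mul_left (x ^ k)

theorem Real.hasSum_pow_mul_pow_div_factorial (d : ℕ) (x : ℝ) :
    HasSum (fun n : ℕ => (n : ℝ) ^ d * x ^ n / n !) (exp x * bellPoly d x) := by
  have hterm (n : ℕ) : (n : ℝ) ^ d * x ^ n / n ! = ∑ k ∈ range (d + 1),
      (stirlingSecond d k : ℝ) * ((n.descFactorial k : ℝ) * x ^ n / n !) := by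
    have hpow : (n : ℝ) ^ d =
        ∑ k ∈ range (d + 1), (Nat.stirlingSecond d k : ℝ) * n.descFactorial k := by
      exact_mod_cast Nat.pow_eq_sum_stirlingSecond_mul_descFactorial n d
    simp only [stirlingSecond_eq_nat_stirlingSecond, hpow, sum_mul, sum_div, mul_div_assoc,
      mul_assoc]
  have hsum : exp x * bellPoly d x =
      ∑ k ∈ range (d + 1), (stirlingSecond d k : ℝ) * (x ^ k * exp x) := by
    rw [bellPoly, mul_sum]
    exact sum_congr rfl fun k _ => by ring
  rw [funext hterm, hsum]
  exact hasSum_sum fun k _ => (hasSum_descFactorial_mul_pow_div_factorial k x).mul_left _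

theorem Real.hasSum_succ_pow_mul_pow_succ_div_factorial {d : ℕ} (hd : d ≠ 0) (x : ℝ) :
    HasSum (fun k : ℕ => ((k : ℝ) + 1) ^ d * x ^ (k + 1) / (k + 1)!) (exp x * bellPoly d x) := by
  have h := (hasSum_nat_add_iff' 1).mpr (hasSum_pow_mul_pow_div_factorial d x)
  simpa [zero_pow hd] using h

theorem signed_simplex_count_eq (a r lam : ℝ) (hr : r ≠ 0) (d k : ℕ) :
    (-1 : ℝ) ^ (k + 1) * lam ^ (k + 1) * (a * ((k : ℝ) + 1) * r ^ k) ^ d / (k + 1)! =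
      (a / r) ^ d * (((k : ℝ) + 1) ^ d * (-(lam * r ^ d)) ^ (k + 1) / (k + 1)!) := by
  rw [mul_pow, mul_pow, neg_pow (lam * r ^ d), mul_pow, ← pow_mul, ← pow_mul, div_pow]
  field_simp
  ring

theorem mean_euler_characteristic_closed_form_general
    (a ε lam : ℝ) (hε : 0 < ε) (d : ℕ) (hd : 1 ≤ d) :
    Summable (fun k : ℕ =>
      |(-1 : ℝ) ^ (k + 1) * lam ^ (k + 1) * (a * ((k : ℝ) + 1) * (2 * ε) ^ k) ^ d
        / (Nat.factorial (k + 1) : ℝ)|) ∧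
    -(∑' k : ℕ, (-1 : ℝ) ^ (k + 1) * lam ^ (k + 1) * (a * ((k : ℝ) + 1) * (2 * ε) ^ k) ^ d
        / (Nat.factorial (k + 1) : ℝ))
      = (a / (2 * ε)) ^ d * Real.exp (-(lam * (2 * ε) ^ d))
          * (-bellPoly d (-(lam * (2 * ε) ^ d))) := by
  have hsum := (Real.hasSum_succ_pow_mul_pow_succ_div_factorial (Nat.one_le_iff_ne_zero.mp hd)
    (-(lam * (2 * ε) ^ d))).mul_left ((a / (2 * ε)) ^ d)
  simp only [← signed_simplex_count_eq a (2 * ε) lam (by positivity)] at hsum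
  exact ⟨hsum.summable.abs, by rw [hsum.tsum_eq]; ring⟩

/-- Closed form for the mean Euler characteristic: the series
`−∑_{k≥1} (−1)^k λ^k (a k (2ε)^{k−1})^d / k!` converges absolutely and equals
`(a/(2ε))^d e^{−λ(2ε)^d} (−B_d(−λ(2ε)^d))`. -/
theorem mean_euler_characteristic_closed_form
    (a ε lam : ℝ) (ha : 0 < a) (hε : 0 < ε) (hlam : 0 < lam) (d : ℕ) (hd : 1 ≤ d) :
    Summable (fun k : ℕ =>
      |(-1 : ℝ) ^ (k + 1) * lam ^ (k + 1) * (a * ((k : ℝ) + 1) * (2 * ε) ^ k) ^ d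
        / (Nat.factorial (k + 1) : ℝ)|) ∧
    -(∑' k : ℕ, (-1 : ℝ) ^ (k + 1) * lam ^ (k + 1) * (a * ((k : ℝ) + 1) * (2 * ε) ^ k) ^ d
        / (Nat.factorial (k + 1) : ℝ))
      = (a / (2 * ε)) ^ d * Real.exp (-(lam * (2 * ε) ^ d))
          * (-bellPoly d (-(lam * (2 * ε) ^ d))) :=
  mean_euler_characteristic_closed_form_general a ε lam hε d hd
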